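/- arXiv:1211.0765 — 3 statements merged into one kernel-verified Lean document; each statement's English description precedes it below -/
import Mathlib

section
/- Let s₂(λ) = σ₂ of the six cross-ratio values of λ as above. For all λ, μ ∈ ℂ \ {0,1}: μ²(μ-1)²(s₂(λ) - s₂(μ)) = (μ-λ)(μ-1/λ)(μ-(1-λ))(μ-1/(1-λ))(μ-λ/(λ-1))(μ-(λ-1)/λ). -/
lemma esymm_six_two (a b c d e f : ℂ) :
    Multiset.esymm {a,b,c,d,e,f} 2 =
      a*b+a*c+a*d+a*e+a*f+b*c+b*d+b*e+b*f+c*d+c*e+c*f+d*e+d*f+e*f := by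
  simp [Multiset.esymm, Multiset.powersetCard_cons, Multiset.insert_eq_cons,
    Multiset.powersetCard_one]
  ring

lemma s2_closed (l : ℂ) (hl0 : l ≠ 0) (hl1 : l ≠ 1) :
    Multiset.esymm {l, 1 / l, 1 - l, 1 / (1 - l), l / (l - 1), (l - 1) / l} 2 =
      (-l^6 + 3*l^5 - 5*l^3 + 3*l - 1) * (l⁻¹ * l⁻¹ * (1-l)⁻¹ * (1-l)⁻¹) := by
  have hl1' : l - 1 ≠ 0 := sub_ne_zero.mpr hl1
  have hl1'' : (1 : ℂ) - l ≠ 0 := sub_ne_zero.mpr (Ne.symm hl1)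
  have hu : l * l⁻¹ = 1 := mul_inv_cancel₀ hl0
  have hv : (1-l) * (1-l)⁻¹ = 1 := mul_inv_cancel₀ hl1''
  have el : l/(l-1) = -(l * (1-l)⁻¹) := by
    rw [div_eq_iff hl1']; linear_combination (-l) * hv
  have ef : (l-1)/l = (l-1) * l⁻¹ := div_eq_mul_inv _ _
  rw [esymm_six_two, one_div, one_div, el, ef]
  linear_combination ((1:ℂ) + (-2:ℂ)*(1-l)⁻¹^2 + (1:ℂ)*l⁻¹^1 + (1:ℂ)*l⁻¹^1*(1-l)⁻¹^1 + (-2:ℂ)*l⁻¹^1*(1-l)⁻¹^2 + (-1:ℂ)*l^1*(1-l)⁻¹^1 + (5:ℂ)*l^1*(1-l)⁻¹^2 + (5:ℂ)*l^2*l⁻¹^1*(1-l)⁻¹^2 + (-3:ℂ)*l^3*(1-l)⁻¹^2 + (1:ℂ)*l^4*(1-l)⁻¹^2 + (-3:ℂ)*l^4*l⁻¹^1*(1-l)⁻¹^2 + (1:ℂ)*l^5*l⁻¹^1*(1-l)⁻¹^2) * hu + ((-1:ℂ) + (-2:ℂ)*(1-l)⁻¹^1 + (-1:ℂ)*l⁻¹^1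 + (-2:ℂ)*l⁻¹^1*(1-l)⁻¹^1 + (1:ℂ)*l⁻¹^2 + (1:ℂ)*l⁻¹^2*(1-l)⁻¹^1 + (-1:ℂ)*l^1 + (2:ℂ)*l^1*(1-l)⁻¹^1 + (1:ℂ)*l^2 + (2:ℂ)*l^2*(1-l)⁻¹^1 + (-1:ℂ)*l^3*(1-l)⁻¹^1) * hv

set_option maxHeartbeats 1000000 in
theorem s2_difference_identity (l m : ℂ) (hl0 : l ≠ 0) (hl1 : l ≠ 1)
    (hm0 : m ≠ 0) (hm1 : m ≠ 1) :
    m ^ 2 * (m - 1) ^ 2 *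
      (Multiset.esymm {l, 1 / l, 1 - l, 1 / (1 - l), l / (l - 1), (l - 1) / l} 2 -
       Multiset.esymm {m, 1 / m, 1 - m, 1 / (1 - m), m / (m - 1), (m - 1) / m} 2) =
    (m - l) * (m - 1 / l) * (m - (1 - l)) * (m - 1 / (1 - l)) *
      (m - l / (l - 1)) * (m - (l - 1) / l) := by
  have hl1' : l - 1 ≠ 0 := sub_ne_zero.mpr hl1
  have hl1'' : (1 : ℂ) - l ≠ 0 := sub_ne_zero.mpr (Ne.symm hl1)
  have hm1' : m - 1 ≠ 0 := sub_ne_zero.mpr hm1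
  have hm1'' : (1 : ℂ) - m ≠ 0 := sub_ne_zero.mpr (Ne.symm hm1)
  have hu : l * l⁻¹ = 1 := mul_inv_cancel₀ hl0
  have hv : (1-l) * (1-l)⁻¹ = 1 := mul_inv_cancel₀ hl1''
  have hum : m * m⁻¹ = 1 := mul_inv_cancel₀ hm0
  have hvm : (1-m) * (1-m)⁻¹ = 1 := mul_inv_cancel₀ hm1''
  have el : l/(l-1) = -(l * (1-l)⁻¹) := by
    rw [div_eq_iff hl1']; linear_combination (-l) * hv
  have ef : (l-1)/l = (l-1) * l⁻¹ := div_eq_mul_inv _ _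
  rw [s2_closed l hl0 hl1, s2_closed m hm0 hm1, one_div, one_div, el, ef]
  linear_combination ((-1:ℂ)*(1-l)⁻¹^2 + (3:ℂ)*m^1*(1-l)⁻¹^1 + (-1:ℂ)*m^1*l⁻¹^1*(1-l)⁻¹^1 + (1:ℂ)*m^1*l⁻¹^1*(1-l)⁻¹^2 + (-2:ℂ)*m^2 + (2:ℂ)*m^2*(1-l)⁻¹^2 + (1:ℂ)*m^2*l⁻¹^1 + (-2:ℂ)*m^2*l⁻¹^1*(1-l)⁻¹^1 + (1:ℂ)*m^2*l⁻¹^1*(1-l)⁻¹^2 + (-1:ℂ)*m^3*(1-l)⁻¹^1 + (-4:ℂ)*m^3*(1-l)⁻¹^2 + (1:ℂ)*m^3*l⁻¹^1 + (3:ℂ)*m^3*l⁻¹^1*(1-l)⁻¹^1 + (-4:ℂ)*m^3*l⁻¹^1*(1-l)⁻¹^2 + (-1:ℂ)*m^4 + (2:ℂ)*m^4*(1-l)⁻¹^2 + (-1:ℂ)*m^4*l⁻¹^1 + (-1:ℂ)*m^4*l⁻¹^1*(1-l)⁻¹^1 + (2:ℂ)*m^4*l⁻¹^1*(1-l)⁻¹^2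 + (1:ℂ)*m^5 + (2:ℂ)*l^1*(1-l)⁻¹^2 + (-1:ℂ)*l^1*l⁻¹^1*(1-l)⁻¹^2 + (-3:ℂ)*l^1*m^1*(1-l)⁻¹^1 + (3:ℂ)*l^1*m^1*l⁻¹^1*(1-l)⁻¹^1 + (-1:ℂ)*l^1*m^1*l⁻¹^1*(1-l)⁻¹^2 + (1:ℂ)*l^1*m^2 + (-1:ℂ)*l^1*m^2*(1-l)⁻¹^1 + (-4:ℂ)*l^1*m^2*(1-l)⁻¹^2 + (-2:ℂ)*l^1*m^2*l⁻¹^1 + (1:ℂ)*l^1*m^2*l⁻¹^1*(1-l)⁻¹^1 + (1:ℂ)*l^1*m^2*l⁻¹^1*(1-l)⁻¹^2 + (1:ℂ)*l^1*m^3 + (-1:ℂ)*l^1*m^3*(1-l)⁻¹^1 + (9:ℂ)*l^1*m^3*(1-l)⁻¹^2 + (-1:ℂ)*l^1*m^3*l⁻¹^1*(1-l)⁻¹^1 + (1:ℂ)*l^1*m^4*(1-l)⁻¹^1 + (-5:ℂ)*l^1*m^4*(1-l)⁻¹^2 + (-1:ℂ)*l^2*(1-l)⁻¹^2 + (2:ℂ)*l^2*l⁻¹^1*(1-l)⁻¹^2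 + (1:ℂ)*l^2*m^1*(1-l)⁻¹^1 + (-1:ℂ)*l^2*m^1*(1-l)⁻¹^2 + (-3:ℂ)*l^2*m^1*l⁻¹^1*(1-l)⁻¹^1 + (2:ℂ)*l^2*m^2*(1-l)⁻¹^1 + (1:ℂ)*l^2*m^2*l⁻¹^1 + (-5:ℂ)*l^2*m^2*l⁻¹^1*(1-l)⁻¹^2 + (-1:ℂ)*l^2*m^3 + (10:ℂ)*l^2*m^3*l⁻¹^1*(1-l)⁻¹^2 + (-5:ℂ)*l^2*m^4*l⁻¹^1*(1-l)⁻¹^2 + (-1:ℂ)*l^3*l⁻¹^1*(1-l)⁻¹^2 + (1:ℂ)*l^3*m^1*(1-l)⁻¹^2 + (1:ℂ)*l^3*m^1*l⁻¹^1*(1-l)⁻¹^1 + (-1:ℂ)*l^3*m^2*(1-l)⁻¹^1 + (3:ℂ)*l^3*m^2*(1-l)⁻¹^2 + (-6:ℂ)*l^3*m^3*(1-l)⁻¹^2 + (3:ℂ)*l^3*m^4*(1-l)⁻¹^2 + (-1:ℂ)*l^4*m^2*(1-l)⁻¹^2 + (3:ℂ)*l^4*m^2*l⁻¹^1*(1-l)⁻¹^2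 + (2:ℂ)*l^4*m^3*(1-l)⁻¹^2 + (-6:ℂ)*l^4*m^3*l⁻¹^1*(1-l)⁻¹^2 + (-1:ℂ)*l^4*m^4*(1-l)⁻¹^2 + (3:ℂ)*l^4*m^4*l⁻¹^1*(1-l)⁻¹^2 + (-1:ℂ)*l^5*m^2*l⁻¹^1*(1-l)⁻¹^2 + (2:ℂ)*l^5*m^3*l⁻¹^1*(1-l)⁻¹^2 + (-1:ℂ)*l^5*m^4*l⁻¹^1*(1-l)⁻¹^2) * hu + ((-1:ℂ) + (-1:ℂ)*(1-l)⁻¹^1 + (3:ℂ)*m^1 + (1:ℂ)*m^1*l⁻¹^1*(1-l)⁻¹^1 + (2:ℂ)*m^2 + (2:ℂ)*m^2*(1-l)⁻¹^1 + (-1:ℂ)*m^2*l⁻¹^1 + (1:ℂ)*m^2*l⁻¹^1*(1-l)⁻¹^1 + (-1:ℂ)*m^2*l⁻¹^2*(1-l)⁻¹^1 + (-5:ℂ)*m^3 + (-4:ℂ)*m^3*(1-l)⁻¹^1 + (-1:ℂ)*m^3*l⁻¹^1 + (-4:ℂ)*m^3*l⁻¹^1*(1-l)⁻¹^1 + (1:ℂ)*m^3*l⁻¹^2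 + (2:ℂ)*m^3*l⁻¹^2*(1-l)⁻¹^1 + (1:ℂ)*m^4 + (2:ℂ)*m^4*(1-l)⁻¹^1 + (1:ℂ)*m^4*l⁻¹^1 + (2:ℂ)*m^4*l⁻¹^1*(1-l)⁻¹^1 + (-1:ℂ)*m^4*l⁻¹^2 + (-1:ℂ)*m^4*l⁻¹^2*(1-l)⁻¹^1 + (1:ℂ)*m^5 + (1:ℂ)*l^1*(1-l)⁻¹^1 + (-1:ℂ)*l^1*m^2 + (-2:ℂ)*l^1*m^2*(1-l)⁻¹^1 + (-1:ℂ)*l^1*m^3 + (4:ℂ)*l^1*m^3*(1-l)⁻¹^1 + (1:ℂ)*l^1*m^4 + (-2:ℂ)*l^1*m^4*(1-l)⁻¹^1 + (-1:ℂ)*l^2*m^1*(1-l)⁻¹^1 + (-1:ℂ)*l^2*m^2*(1-l)⁻¹^1 + (1:ℂ)*l^2*m^3 + (4:ℂ)*l^2*m^3*(1-l)⁻¹^1 + (-1:ℂ)*l^2*m^4 + (-2:ℂ)*l^2*m^4*(1-l)⁻¹^1 + (1:ℂ)*l^3*m^2*(1-l)⁻¹^1 + (-2:ℂ)*l^3*m^3*(1-l)⁻¹^1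 + (1:ℂ)*l^3*m^4*(1-l)⁻¹^1) * hv
    + (-(-m^6 + 3*m^5 - 5*m^3 + 3*m - 1) * (m*m⁻¹ + 1) * ((1-m)*(1-m)⁻¹)^2) * hum
    + (-(-m^6 + 3*m^5 - 5*m^3 + 3*m - 1) * ((1-m)*(1-m)⁻¹ + 1)) * hvm
end

section
/- Let z₁, z₂, z₃, z₄ be four distinct points of ℂ with z₃ = 1 and z₄ = -1. Then there exist a, b ∈ ℂ with a ≠ b and a ≠ -b such that the Möbius transformation α(x) = (ax+b)/(bx+a) fixes 1 and -1 and satisfies α(z₁) + α(z₂) = 0. -/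
theorem balancing_mobius_exists (z₁ z₂ z₃ z₄ : ℂ)
    (h12 : z₁ ≠ z₂) (h13 : z₁ ≠ z₃) (h14 : z₁ ≠ z₄)
    (h23 : z₂ ≠ z₃) (h24 : z₂ ≠ z₄) (h34 : z₃ ≠ z₄)
    (h3 : z₃ = 1) (h4 : z₄ = -1) :
    ∃ a b : ℂ, a ≠ b ∧ a ≠ -b ∧
      (a * 1 + b) / (b * 1 + a) = 1 ∧
      (a * (-1) + b) / (b * (-1) + a) = -1 ∧
      (a * z₁ + b) / (b * z₁ + a) + (a * z₂ + b) / (b * z₂ + a) = 0 := by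
  subst h3 h4
  by_cases hs : z₁ + z₂ = 0
  · refine ⟨1, 0, by norm_num, by norm_num, by norm_num, by norm_num, ?_⟩
    simp only [one_mul, zero_mul, add_zero, zero_add, div_one]
    exact hs
  · obtain ⟨w, hw⟩ := IsAlgClosed.exists_pow_nat_eq ((z₁*z₂+1)^2 - (z₁+z₂)^2) (n := 2) (by norm_num)
    obtain ⟨t, ht⟩ : ∃ t : ℂ, t = (-(z₁*z₂+1) + w) / (z₁+z₂) := ⟨_, rfl⟩
    have hts : t * (z₁+z₂) = -(z₁*z₂+1) + w := by
      rw [ht]; field_simp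
    have hq' : (z₁+z₂) * ((z₁+z₂)*t^2 + 2*(z₁*z₂+1)*t + (z₁+z₂)) = 0 := by
      linear_combination (t*(z₁+z₂) + (z₁*z₂+1) + w) * hts + hw
    have hq : (z₁+z₂)*t^2 + 2*(z₁*z₂+1)*t + (z₁+z₂) = 0 :=
      (mul_eq_zero.mp hq').resolve_left hs
    have ht1 : t ≠ 1 := by
      intro h; rw [h] at hq
      have : 2 * ((z₁ + 1) * (z₂ + 1)) = 0 := by linear_combination hq
      have h1 : z₁ + 1 ≠ 0 := by intro h'; apply h14; linear_combination h'
      have h2 : z₂ + 1 ≠ 0 := by intro h'; apply h24; linear_combination h'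
      simpa [h1, h2] using this
    have ht2 : t ≠ -1 := by
      intro h; rw [h] at hq
      have : (-2) * ((z₁ - 1) * (z₂ - 1)) = 0 := by linear_combination hq
      have h1 : z₁ - 1 ≠ 0 := sub_ne_zero.mpr h13
      have h2 : z₂ - 1 ≠ 0 := sub_ne_zero.mpr h23
      simpa [h1, h2] using this
    have htsq : t^2 - 1 ≠ 0 := by
      intro h
      rcases mul_eq_zero.mp (show (t-1)*(t+1) = 0 by linear_combination h) with h' | h'
      · exact ht1 (by linear_combination h')
      · exact ht2 (by linear_combination h')
    have hd1 : t * z₁ + 1 ≠ 0 := by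
      intro h
      have key : (t^2 - 1) * (z₂ * t + 1) = 0 := by
        linear_combination t * hq - (t^2 + 2*z₂*t + 1) * h
      have h2 : z₂ * t + 1 = 0 := by
        rcases mul_eq_zero.mp key with h' | h'
        · exact absurd h' htsq
        · exact h'
      have htne : t ≠ 0 := by intro h0; rw [h0] at h; norm_num at h
      apply h12
      have : (z₁ - z₂) * t = 0 := by linear_combination h - h2
      rcases mul_eq_zero.mp this with h' | h'
      · linear_combination h'
      · exact absurd h' htne
    have hd2 : t * z₂ + 1 ≠ 0 := by
      intro h
      have key : (t^2 - 1) * (z₁ * t + 1) = 0 := by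
        linear_combination t * hq - (t^2 + 2*z₁*t + 1) * h
      have h2 : z₁ * t + 1 = 0 := by
        rcases mul_eq_zero.mp key with h' | h'
        · exact absurd h' htsq
        · exact h'
      have htne : t ≠ 0 := by intro h0; rw [h0] at h; norm_num at h
      apply h12
      have : (z₁ - z₂) * t = 0 := by linear_combination h2 - h
      rcases mul_eq_zero.mp this with h' | h'
      · linear_combination h'
      · exact absurd h' htne
    refine ⟨1, t, fun h => ht1 h.symm, fun h => ht2 (by linear_combination h), ?_, ?_, ?_⟩
    · have h0 : t + 1 ≠ 0 := fun h => ht2 (by linear_combination h)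
      rw [div_eq_one_iff_eq (by simpa using h0)]; ring
    · have h1 : t * (-1) + 1 ≠ 0 := fun h => ht1 (by linear_combination -h)
      rw [div_eq_iff h1]; ring
    · rw [div_add_div _ _ hd1 hd2, div_eq_zero_iff]
      left
      linear_combination hq
end

section
/- Define ω : ℂ² → ℂ by ω(x,y) = (e^{xy} - 1)/x for x ≠ 0 and ω(0,y) = y, and χ : ℂ² → ℂ² by χ(x,y) = (x, -ω(x,y)). Then χ is holomorphic, its image is exactly {(a,b) ∈ ℂ² : ab ≠ 1}, and its differential at (0,0) is invertible (indeed equal to the identity up to sign in the second coordinate). -/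
noncomputable def omegaBL : ℂ × ℂ → ℂ :=
  fun p => if p.1 = 0 then p.2 else (Complex.exp (p.1 * p.2) - 1) / p.1

noncomputable def chiBL : ℂ × ℂ → ℂ × ℂ :=
  fun p => (p.1, -omegaBL p)

/-! The removable-singularity function `E = dslope exp 0`, i.e. `E z = (e^z - 1)/z` with `E 0 = 1`,
is entire and `ω(x, y) = y · E(xy)`; this gives holomorphy of `χ` and, since `E 0 = 1`, its
derivative at the origin. For the image, `x · ω(x, y) = e^{xy} - 1` holds for all `(x, y)`, so the
product of the coordinates of `χ(x, y)` is `1 - e^{xy} ≠ 1`; conversely `(a, b)` with `ab ≠ 1` is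
hit by `(a, log(1 - ab)/a)` when `a ≠ 0` and by `(0, -b)` otherwise. -/

open Complex

theorem Differentiable.dslope {E : Type*} [NormedAddCommGroup E] [NormedSpace ℂ E] [CompleteSpace E]
    {f : ℂ → E} (hf : Differentiable ℂ f) (c : ℂ) : Differentiable ℂ (dslope f c) :=
  differentiableOn_univ.1 <| (differentiableOn_dslope Filter.univ_mem).2 hf.differentiableOn

lemma mul_omegaBL (p : ℂ × ℂ) : p.1 * omegaBL p = exp (p.1 * p.2) - 1 := by
  rcases eq_or_ne p.1 0 with hx | hx
  · simp [hx]
  · simp only [omegaBL, hx, if_false]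
    field_simp

lemma omegaBL_eq_mul_dslope_cexp (p : ℂ × ℂ) : omegaBL p = p.2 * dslope exp 0 (p.1 * p.2) := by
  rcases eq_or_ne p.1 0 with hx | hx
  · simp [omegaBL, hx]
  · apply mul_left_cancel₀ hx
    have := sub_smul_dslope exp 0 (p.1 * p.2)
    rw [sub_zero, smul_eq_mul, exp_zero] at this
    rw [mul_omegaBL, ← this]
    ring

lemma differentiable_omegaBL : Differentiable ℂ omegaBL := by
  rw [funext omegaBL_eq_mul_dslope_cexp]
  exact differentiable_snd.mul
    ((differentiable_exp.dslope 0).comp (differentiable_fst.mul differentiable_snd))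

lemma hasFDerivAt_omegaBL_zero : HasFDerivAt omegaBL (ContinuousLinearMap.snd ℂ ℂ ℂ) (0, 0) := by
  have hG : DifferentiableAt ℂ (fun p : ℂ × ℂ => dslope exp 0 (p.1 * p.2)) (0, 0) :=
    ((differentiable_exp.dslope 0).comp (differentiable_fst.mul differentiable_snd)) _
  rw [funext omegaBL_eq_mul_dslope_cexp]
  exact (hasFDerivAt_snd.mul hG.hasFDerivAt).congr_fderiv <| by
    ext <;> simp

lemma range_chiBL : Set.range chiBL = {p : ℂ × ℂ | p.1 * p.2 ≠ 1} := by
  ext ⟨a, b⟩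
  constructor
  · rintro ⟨p, hp⟩
    simp only [chiBL, Prod.mk.injEq] at hp
    obtain ⟨rfl, rfl⟩ := hp
    have := mul_omegaBL p
    simp only [Set.mem_ofPred_eq, mul_neg, this]
    intro h
    exact exp_ne_zero _ (by linear_combination -h)
  · intro hab
    rcases eq_or_ne a 0 with rfl | ha
    · exact ⟨(0, -b), by simp [chiBL, omegaBL]⟩
    · refine ⟨(a, log (1 - a * b) / a), ?_⟩
      have hlog : exp (a * (log (1 - a * b) / a)) = 1 - a * b := by
        rw [mul_div_cancel₀ _ ha, exp_log (sub_ne_zero.2 (Ne.symm hab))]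
      have := mul_omegaBL (a, log (1 - a * b) / a)
      rw [hlog] at this
      simp only [chiBL, Prod.mk.injEq, true_and, neg_eq_iff_eq_neg]
      exact mul_left_cancel₀ ha (by linear_combination this)

theorem chi_holomorphic_surjective_dominating :
    Differentiable ℂ chiBL ∧
    Set.range chiBL = {p : ℂ × ℂ | p.1 * p.2 ≠ 1} ∧
    HasFDerivAt chiBL
      ((ContinuousLinearMap.fst ℂ ℂ ℂ).prod (-(ContinuousLinearMap.snd ℂ ℂ ℂ)))
      (0, 0) :=
  ⟨differentiable_fst.prodMk differentiable_omegaBL.neg, range_chiBL,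
    hasFDerivAt_fst.prodMk hasFDerivAt_omegaBL_zero.neg⟩
end
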